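/- Let H be a division ring of finite dimension n over its center k, and assume k is infinite. If F is a division ring that is a classical right quotient ring of the ring H[X] of polynomial functions on H (via an injective ring homomorphism), and F' is a division ring that is a classical right quotient ring of the iterated polynomial ring H_c[t₁,…,t_n] in n central variables over H (via an injective ring homomorphism), then F and F' are isomorphic as rings. -/

import Mathlib

universe u v w x

/-- The subgroup of ring automorphisms of `M` fixing the image of `ι` pointwise
(the Galois group of the extension `M/F` given by `ι`). -/
def fixingAut {F M : Type*} [DivisionRing F] [DivisionRing M] (ι : F →+* M) :
    Subgroup (RingAut M) where
  carrier := {σ | ∀ x : F, σ (ι x) = ι x}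
  one_mem' := fun _ => rfl
  mul_mem' := by
    intro a b ha hb x
    show a (b (ι x)) = ι x
    rw [hb x, ha x]
  inv_mem' := by
    intro a ha x
    show a.symm (ι x) = ι x
    conv_lhs => rw [← ha x]
    exact a.symm_apply_apply _

/-- The extension `M/F` given by `ι : F →+* M` is Galois: every element of `M` fixed by all
ring automorphisms of `M` fixing `ι(F)` pointwise lies in `ι(F)`. -/
def IsGaloisExt {F M : Type*} [DivisionRing F] [DivisionRing M] (ι : F →+* M) : Prop :=
  ∀ m : M, (∀ σ ∈ fixingAut ι, σ m = m) → m ∈ Set.range ι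

/-- The ring `H[X]` of polynomial functions on a division ring `H`: the subring of `H → H`
(with pointwise operations) generated by the constant functions and the identity function. -/
def polyFunRing (H : Type*) [DivisionRing H] : Subring (H → H) :=
  Subring.closure ({f | ∃ c : H, f = Function.const H c} ∪ {id})

/-- `F` is a classical right quotient ring of `R` via the injective ring homomorphism `φ`:
every element of `F` is of the form `φ a * (φ b)⁻¹` with `b ≠ 0`. -/
def IsClassicalRightQuotient {R F : Type*} [Ring R] [DivisionRing F] (φ : R →+* F) : Prop :=
  Function.Injective φ ∧ ∀ x : F, ∃ a b : R, b ≠ 0 ∧ x = φ a * (φ b)⁻¹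

/-- Auxiliary construction for the iterated polynomial ring. -/
noncomputable def IterPolyAux (H : Type u) [Ring H] : ℕ → ((T : Type u) × Ring T)
  | 0 => ⟨H, inferInstance⟩
  | n + 1 =>
    letI := (IterPolyAux H n).2
    ⟨Polynomial (IterPolyAux H n).1, inferInstance⟩

/-- The iterated polynomial ring `H_c[t₁, …, t_n]` in `n` central variables over `H`:
`IterPoly H 0 = H` and `IterPoly H (n + 1) = Polynomial (IterPoly H n)`. -/
def IterPoly (H : Type u) [Ring H] (n : ℕ) : Type u := (IterPolyAux H n).1

noncomputable instance (H : Type u) [Ring H] (n : ℕ) : Ring (IterPoly H n) :=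
  (IterPolyAux H n).2

/-!
A classical right quotient ring of a domain `R` is the (right) Ore localization of `R`, hence is
unique up to isomorphism; so it suffices to show `H[X] ≃+* H_c[t₁, …, tₙ]`. Fix a basis
`b₁, …, bₙ` of `H` over its center `k` and send `tᵢ` to the `i`-th coordinate function. The image
contains `x ↦ x = ∑ bᵢ tᵢ(x)`, and it consists of polynomial functions: by the Jacobson density
theorem for the simple `H ⊗ₖ Hᵐᵒᵖ`-module `H`, every `k`-linear map `H → H` is a sum of maps
`x ↦ a x c`. The map is injective because, `k` being infinite, a polynomial over `H` vanishing
at every central point is zero.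
-/

open MulOpposite OreLocalization nonZeroDivisors TensorProduct

namespace IsClassicalRightQuotient

variable {R F : Type*} [Ring R] [DivisionRing F] {φ : R →+* F}

theorem map_ne_zero (hφ : IsClassicalRightQuotient φ) {b : R} (hb : b ≠ 0) : φ b ≠ 0 :=
  (map_ne_zero_iff φ hφ.1).mpr hb

theorem noZeroDivisors (hφ : IsClassicalRightQuotient φ) : NoZeroDivisors R :=
  hφ.1.noZeroDivisors φ (map_zero φ) (map_mul φ)

theorem exists_mul_eq_mul (hφ : IsClassicalRightQuotient φ) (a : R) {b : R} (hb : b ≠ 0) :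
    ∃ c d : R, d ≠ 0 ∧ a * d = b * c := by
  obtain ⟨c, d, hd, h⟩ := hφ.2 ((φ b)⁻¹ * φ a)
  refine ⟨c, d, hd, hφ.1 ?_⟩
  rw [map_mul, map_mul, ← inv_mul_eq_iff_eq_mul₀ (hφ.map_ne_zero hb), ← mul_assoc, h,
    inv_mul_cancel_right₀ (hφ.map_ne_zero hd)]

theorem nonempty_oreSet_op (hφ : IsClassicalRightQuotient φ) : Nonempty (OreSet (Rᵐᵒᵖ)⁰) := by
  have := hφ.noZeroDivisors
  have := φ.domain_nontrivial
  refine nonempty_oreSet_iff_of_noZeroDivisors.mpr fun r s => ?_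
  obtain ⟨c, d, hd, h⟩ := hφ.exists_mul_eq_mul r.unop (b := s.1.unop) (by simp)
  exact ⟨op c, ⟨op d, mem_nonZeroDivisors_of_ne_zero (by simpa using hd)⟩, unop_injective h⟩

noncomputable def unitsOp (hφ : IsClassicalRightQuotient φ) : (Rᵐᵒᵖ)⁰ →* (Fᵐᵒᵖ)ˣ where
  toFun s := Units.mk0 (op (φ s.1.unop)) (by
    have := φ.domain_nontrivial
    simpa using hφ.map_ne_zero (by simp))
  map_one' := by ext; simp
  map_mul' _ _ := by ext; simp

theorem coe_unitsOp (hφ : IsClassicalRightQuotient φ) (s : (Rᵐᵒᵖ)⁰) :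
    (hφ.unitsOp s : Fᵐᵒᵖ) = φ.op s := rfl

/-- Mathlib's Ore localization is on the left, so the right fractions `φ a * (φ b)⁻¹` in `F`
become left fractions of `Rᵐᵒᵖ` in `Fᵐᵒᵖ`. -/
noncomputable def ringEquivOreLocalization [OreSet (Rᵐᵒᵖ)⁰] (hφ : IsClassicalRightQuotient φ) :
    Fᵐᵒᵖ ≃+* OreLocalization (Rᵐᵒᵖ)⁰ Rᵐᵒᵖ := by
  have := hφ.noZeroDivisors
  have := φ.domain_nontrivial
  refine (RingEquiv.ofBijective (universalHom φ.op hφ.unitsOp fun s => (hφ.coe_unitsOp s).symm)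
    ⟨RingHom.injective _, fun x => ?_⟩).symm
  obtain ⟨a, b, hb, hx⟩ := hφ.2 x.unop
  refine ⟨op a /ₒ ⟨op b, mem_nonZeroDivisors_of_ne_zero (by simpa using hb)⟩, ?_⟩
  rw [universalHom_apply]
  apply unop_injective
  simp [unitsOp, hx]

theorem comp_ringEquiv {S : Type*} [Ring S] (hφ : IsClassicalRightQuotient φ) (e : S ≃+* R) :
    IsClassicalRightQuotient (φ.comp e.toRingHom) := by
  refine ⟨hφ.1.comp e.injective, fun x => ?_⟩
  obtain ⟨a, b, hb, hx⟩ := hφ.2 x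
  exact ⟨e.symm a, e.symm b, by simpa using hb, by simpa using hx⟩

theorem nonempty_ringEquiv {F' : Type*} [DivisionRing F'] {φ' : R →+* F'}
    (hφ : IsClassicalRightQuotient φ) (hφ' : IsClassicalRightQuotient φ') :
    Nonempty (F ≃+* F') := by
  obtain ⟨_⟩ := hφ.nonempty_oreSet_op
  exact ⟨RingEquiv.unop (hφ.ringEquivOreLocalization.trans hφ'.ringEquivOreLocalization.symm)⟩

end IsClassicalRightQuotient

namespace Polynomial

theorem eq_zero_of_forall_eval_algebraMap_eq_zero {K A : Type*} [Field K] [Infinite K] [Ring A]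
    [Algebra K A] (q : A[X]) (h : ∀ t : K, q.eval (algebraMap K A t) = 0) : q = 0 := by
  ext s
  rw [coeff_zero, ← Module.forall_dual_apply_eq_zero_iff K]
  intro Λ
  let r : K[X] := q.sum fun i a => monomial i (Λ a)
  have hr : r = 0 := by
    refine zero_of_eval_zero r fun t => ?_
    have hterm (i : ℕ) (a : A) : a * algebraMap K A t ^ i = t ^ i • a := by
      rw [← map_pow, ← Algebra.commutes, Algebra.smul_def]
    have hΛ := congrArg Λ (h t)
    rw [eval_eq_sum] at hΛ
    simpa [r, eval_finsetSum, hterm, sum_def, mul_comm] using hΛ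
  by_cases hs : q.coeff s = 0
  · simp [hs]
  · simpa [r, coeff_sum, coeff_monomial, sum_def, hs] using congrArg (coeff · s) hr

end Polynomial

section Density

variable {H : Type*} [DivisionRing H]

local notation "k" => Subring.center H

theorem const_mem_polyFunRing (c : H) : Function.const H c ∈ polyFunRing H :=
  Subring.subset_closure (.inl ⟨c, rfl⟩)

theorem id_mem_polyFunRing : (id : H → H) ∈ polyFunRing H :=
  Subring.subset_closure (.inr rfl)

attribute [local instance] instModuleTensorProductMop

theorem tmul_smul_eq_mul_mul (a : H) (b : Hᵐᵒᵖ) (x : H) : (a ⊗ₜ[k] b) • x = a * x * b.unop :=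
  AlgHom.mulLeftRight_apply k H a b x

instance isSimpleModule_tensorProduct_op : IsSimpleModule (H ⊗[k] Hᵐᵒᵖ) H :=
  isSimpleModule_iff_toSpanSingleton_surjective.mpr
    ⟨inferInstance, fun x hx y => ⟨(y * x⁻¹) ⊗ₜ 1, by simp [tmul_smul_eq_mul_mul, hx]⟩⟩

theorem exists_center_apply_eq_mul (g : Module.End (H ⊗[k] Hᵐᵒᵖ) H) :
    ∃ c : k, ∀ x, g x = c * x := by
  have hl (x : H) : g x = x * g 1 := by
    simpa [tmul_smul_eq_mul_mul] using g.map_smul (x ⊗ₜ[k] 1) 1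
  have hr (x : H) : g x = g 1 * x := by
    simpa [tmul_smul_eq_mul_mul] using g.map_smul (1 ⊗ₜ[k] op x) 1
  exact ⟨⟨g 1, Subring.mem_center_iff.mpr fun x => (hl x).symm.trans (hr x)⟩, hr⟩

def LinearMap.toEndEnd (ℓ : H →ₗ[k] H) : Module.End (Module.End (H ⊗[k] Hᵐᵒᵖ) H) H where
  toFun := ℓ
  map_add' := ℓ.map_add
  map_smul' g x := by
    obtain ⟨c, hc⟩ := exists_center_apply_eq_mul g
    simp only [Module.End.smul_def, RingHom.id_apply, hc]
    exact ℓ.map_smul c x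

theorem LinearMap.exists_eq_mulLeftRight [FiniteDimensional k H] (ℓ : H →ₗ[k] H) :
    ∃ r : H ⊗[k] Hᵐᵒᵖ, ℓ = AlgHom.mulLeftRight k H r := by
  classical
  let b := Module.finBasis k H
  obtain ⟨r, hr⟩ := jacobson_density ℓ.toEndEnd (Finset.univ.image b)
  exact ⟨r, b.ext fun i => hr (b i) (by simp)⟩

theorem mulLeftRight_mem_polyFunRing (r : H ⊗[k] Hᵐᵒᵖ) :
    ⇑(AlgHom.mulLeftRight k H r) ∈ polyFunRing H := by
  induction r using TensorProduct.induction_on with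
  | zero => rw [map_zero]; exact zero_mem _
  | tmul a b =>
    have : ⇑(AlgHom.mulLeftRight k H (a ⊗ₜ b)) =
        Function.const H a * id * Function.const H b.unop := by
      ext x; simp
    rw [this]
    exact mul_mem (mul_mem (const_mem_polyFunRing a) id_mem_polyFunRing) (const_mem_polyFunRing _)
  | add r s hr hs => rw [map_add]; exact add_mem hr hs

theorem LinearMap.coe_mem_polyFunRing [FiniteDimensional k H] (ℓ : H →ₗ[k] H) :
    ⇑ℓ ∈ polyFunRing H := by
  obtain ⟨r, rfl⟩ := ℓ.exists_eq_mulLeftRight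
  exact mulLeftRight_mem_polyFunRing r

end Density

namespace IterPoly

section Ring

variable {H : Type u} [Ring H]

noncomputable def succEquiv (m : ℕ) : IterPoly H (m + 1) ≃+* Polynomial (IterPoly H m) :=
  RingEquiv.refl _

noncomputable def C : ∀ m : ℕ, H →+* IterPoly H m
  | 0 => RingHom.id H
  | m + 1 => (succEquiv m).symm.toRingHom.comp (Polynomial.C.comp (C m))

noncomputable def X : ∀ m : ℕ, Fin m → IterPoly H m
  | 0 => Fin.elim0
  | m + 1 =>
    Fin.cons ((succEquiv m).symm Polynomial.X) fun i => (succEquiv m).symm (Polynomial.C (X m i))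

theorem closure_range_C_union_range_X (m : ℕ) :
    Subring.closure (Set.range (C (H := H) m) ∪ Set.range (X m)) = ⊤ := by
  induction m with
  | zero => exact eq_top_iff.mpr fun a _ => Subring.subset_closure (Set.mem_union_left _ ⟨a, rfl⟩)
  | succ m ih =>
    set T := Subring.closure (Set.range (C (H := H) (m + 1)) ∪ Set.range (X (m + 1)))
    let g : IterPoly H m →+* IterPoly H (m + 1) := (succEquiv m).symm.toRingHom.comp Polynomial.C
    have hg (a : IterPoly H m) : g a ∈ T := by
      have : Subring.closure (Set.range (C m) ∪ Set.range (X m)) ≤ T.comap g := by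
        refine Subring.closure_le.mpr ?_
        rintro _ (⟨a, rfl⟩ | ⟨i, rfl⟩)
        · exact Subring.subset_closure (.inl ⟨a, rfl⟩)
        · exact Subring.subset_closure (.inr ⟨i.succ, by simp [X, g]⟩)
      exact this (ih ▸ Subring.mem_top a)
    have hX : (succEquiv m).symm Polynomial.X ∈ T := Subring.subset_closure (.inr ⟨0, by simp [X]⟩)
    refine eq_top_iff.mpr fun p _ => ?_
    rw [← (succEquiv m).symm_apply_apply p]
    induction succEquiv m p using Polynomial.induction_on' with
    | add p q hp hq => rw [map_add]; exact add_mem hp hq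
    | monomial n a =>
      rw [← Polynomial.C_mul_X_pow_eq_monomial, map_mul, map_pow]
      exact mul_mem (hg a) (pow_mem hX n)

variable {S : Type*} [Ring S] (f : H →+* S)

noncomputable def eval : ∀ {m : ℕ}, (Fin m → Subring.center S) → IterPoly H m →+* S
  | 0, _ => f
  | _ + 1, v => (Polynomial.eval₂RingHom' (eval (Fin.tail v)) (v 0)
      fun _ => Subring.mem_center_iff.mp (v 0).2 _).comp (succEquiv _).toRingHom

theorem eval_succ {m : ℕ} (v : Fin (m + 1) → Subring.center S) (p : IterPoly H (m + 1)) :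
    eval f v p = (succEquiv m p).eval₂ (eval f (Fin.tail v)) (v 0) := rfl

@[simp]
theorem eval_C : ∀ {m : ℕ} (v : Fin m → Subring.center S) (a : H), eval f v (C m a) = f a
  | 0, _, _ => rfl
  | m + 1, v, a => by simp [C, eval_succ, eval_C]

@[simp]
theorem eval_X : ∀ {m : ℕ} (v : Fin m → Subring.center S) (i : Fin m), eval f v (X m i) = v i
  | 0, _, i => i.elim0
  | m + 1, v, i => by
    induction i using Fin.cases <;> simp [X, eval_succ, eval_X, Fin.tail]

end Ring

section DivisionRing

variable {H : Type u} [DivisionRing H]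

theorem eq_zero_of_forall_eval_eq_zero [Infinite (Subring.center H)] : ∀ {m : ℕ} (p : IterPoly H m),
    (∀ c : Fin m → Subring.center H, eval (RingHom.id H) c p = 0) → p = 0
  | 0, p, h => h Fin.elim0
  | m + 1, p, h => by
    apply (succEquiv m).injective
    ext s
    rw [map_zero, Polynomial.coeff_zero]
    refine eq_zero_of_forall_eval_eq_zero _ fun c => ?_
    have hq : (succEquiv m p).map (eval (RingHom.id H) c) = 0 :=
      Polynomial.eq_zero_of_forall_eval_algebraMap_eq_zero _ fun t => by
        rw [Polynomial.eval_map]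
        exact h (Fin.cons t c)
    simpa using congrArg (Polynomial.coeff · s) hq

variable {m : ℕ} (b : Module.Basis (Fin m) (Subring.center H) H)

noncomputable def evalBasis : IterPoly H m →+* (H → H) :=
  RingHom.pi fun x => eval (RingHom.id H) (b.equivFun x)

theorem evalBasis_C (a : H) : evalBasis b (C m a) = Function.const H a := by
  ext; simp [evalBasis]

theorem evalBasis_X (i : Fin m) : evalBasis b (X m i) = fun x => (b.equivFun x i : H) := by
  ext; simp [evalBasis]

theorem evalBasis_injective [Infinite (Subring.center H)] : Function.Injective (evalBasis b) :=
  (injective_iff_map_eq_zero _).mpr fun p hp => eq_zero_of_forall_eval_eq_zero p fun c => by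
    simpa only [evalBasis, RingHom.pi_apply, LinearEquiv.apply_symm_apply, Pi.zero_apply] using
      congrFun hp (b.equivFun.symm c)

theorem range_evalBasis : (evalBasis b).range = polyFunRing H := by
  have := Module.Finite.of_basis b
  apply le_antisymm
  · rintro _ ⟨p, rfl⟩
    have hp : p ∈ Subring.closure (Set.range (C m) ∪ Set.range (X m)) := by
      rw [closure_range_C_union_range_X]; trivial
    refine Subring.closure_le (t := (polyFunRing H).comap (evalBasis b)) |>.mpr ?_ hp
    rintro _ (⟨a, rfl⟩ | ⟨i, rfl⟩)
    · simpa [evalBasis_C] using const_mem_polyFunRing a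
    · rw [SetLike.mem_coe, Subring.mem_comap, evalBasis_X]
      exact ((Algebra.linearMap (Subring.center H) H).comp (b.coord i)).coe_mem_polyFunRing
  · refine Subring.closure_le.mpr ?_
    rintro _ (⟨a, rfl⟩ | rfl)
    · exact ⟨C m a, evalBasis_C b a⟩
    · refine ⟨∑ i, C m (b i) * X m i, funext fun x => ?_⟩
      conv_rhs => rw [id, ← b.sum_equivFun x]
      simp only [map_sum, map_mul, evalBasis_C, evalBasis_X, Finset.sum_apply, Pi.mul_apply,
        Function.const_apply, Algebra.smul_def, Algebra.commutes]
      rfl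

noncomputable def ringEquivPolyFunRing [Infinite (Subring.center H)] :
    IterPoly H m ≃+* polyFunRing H :=
  (RingEquiv.ofLeftInverse (Function.leftInverse_invFun (evalBasis_injective b))).trans
    (RingEquiv.subringCongr (range_evalBasis b))

end DivisionRing

end IterPoly

theorem fraction_field_of_polyFunRing_iso_fraction_field_of_iterated_central_polynomials
    {H : Type u} [DivisionRing H] [FiniteDimensional (Subring.center H) H] (n : ℕ)
    (hn : Module.finrank (Subring.center H) H = n)
    (hk : Infinite (Subring.center H))
    {F : Type v} [DivisionRing F]
    (φ : polyFunRing H →+* F) (hφ : IsClassicalRightQuotient φ)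
    {F' : Type w} [DivisionRing F']
    (φ' : IterPoly H n →+* F') (hφ' : IsClassicalRightQuotient φ') :
    Nonempty (F ≃+* F') := by
  let b := Module.finBasisOfFinrankEq (Subring.center H) H hn
  exact hφ.nonempty_ringEquiv (hφ'.comp_ringEquiv (IterPoly.ringEquivPolyFunRing b).symm)
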